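/- arXiv:2401.00541 — 6 statements merged into one kernel-verified Lean document; each statement's English description precedes it below -/
import Mathlib

section
/- Let R be a Noetherian ring and I an ideal of R generated by m elements. Then for every j with 1 ≤ j ≤ m, the power I^(m-j) is contained in the j-th Fitting ideal Fitt_j(I) of I (regarded as an R-module). -/
open Ideal IsLocalRing

/-- The `j`-th Fitting ideal of the `R`-module `M`, computed with respect to the
generating family `g : Fin m → M`: the ideal generated by the `(m-j)`-minors of a
relation matrix of `M` with respect to `g`. -/
noncomputable def fittingIdeal {R : Type} [CommRing R] {M : Type} [AddCommGroup M] [Module R M]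
    (m : ℕ) (g : Fin m → M) (j : ℕ) : Ideal R :=
  Ideal.span { x : R | ∃ c : Fin (m - j) → (Fin m → R),
    (∀ l, ∑ i, c l i • g i = 0) ∧
    ∃ r : Fin (m - j) → Fin m, x = (Matrix.of fun i l => c l (r i)).det }

/-- The grade of an ideal: the supremum of lengths of regular sequences contained in `I`. -/
noncomputable def Ideal.grade' {R : Type} [CommRing R] (I : Ideal R) : ℕ∞ :=
  sSup { n : ℕ∞ | ∃ rs : List R, (rs.length : ℕ∞) = n ∧ (∀ r ∈ rs, r ∈ I) ∧
    RingTheory.Sequence.IsRegular R rs }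

/-- The minimal number of generators of a module, as an element of `ℕ∞`. -/
noncomputable def mu (R : Type) [Semiring R] (M : Type) [AddCommMonoid M] [Module R M] : ℕ∞ :=
  sInf { n : ℕ∞ | ∃ s : Finset M, (s.card : ℕ∞) = n ∧ Submodule.span R (s : Set M) = ⊤ }

/-- The minimal number of generators of an ideal, as an element of `ℕ∞`. -/
noncomputable def muId {R : Type} [CommRing R] (I : Ideal R) : ℕ∞ :=
  sInf { n : ℕ∞ | ∃ s : Finset R, (s.card : ℕ∞) = n ∧ Ideal.span (s : Set R) = I }

/-- The height of an ideal: the infimum of the heights of primes containing it. -/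
noncomputable def heightI {R : Type} [CommRing R] (I : Ideal R) : ℕ∞ :=
  sInf { h : ℕ∞ | ∃ P : PrimeSpectrum R, I ≤ P.asIdeal ∧ Order.height P = h }

/-- A (Noetherian) ring is Cohen–Macaulay if grade equals height for every proper ideal. -/
def IsCohenMacaulayRing (R : Type) [CommRing R] : Prop :=
  ∀ I : Ideal R, I ≠ ⊤ → Ideal.grade' I = heightI I

/-- A Noetherian local ring is Cohen–Macaulay if the grade of its maximal ideal
(its depth) equals its Krull dimension. -/
def IsCohenMacaulayLocalRing (R : Type) [CommRing R] [IsLocalRing R] : Prop :=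
  (Ideal.grade' (maximalIdeal R) : WithBot ℕ∞) = ringKrullDim R

/-- A Noetherian local ring is regular if its maximal ideal is generated by
`dim R` elements. -/
def IsRegularLocalRing' (A : Type) [CommRing A] [IsLocalRing A] : Prop :=
  IsNoetherianRing A ∧ (muId (maximalIdeal A) : WithBot ℕ∞) = ringKrullDim A

/-- A ring is regular if all its localizations at primes are regular local rings. -/
def IsRegularRing' (R : Type) [CommRing R] : Prop :=
  ∀ (P : Ideal R) [P.IsPrime], IsRegularLocalRing' (Localization.AtPrime P)

/-- The trace ideal of a module: the sum of the images of all homomorphisms to the ring. -/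
noncomputable def traceIdeal (R : Type) [CommRing R] (M : Type) [AddCommGroup M] [Module R M] :
    Ideal R :=
  ⨆ φ : M →ₗ[R] R, LinearMap.range φ

open CategoryTheory in
/-- `Ext^n_R(N, M)` for `R`-modules `N`, `M`. -/
noncomputable def extModule (R : Type) [CommRing R] (n : ℕ) (N M : ModuleCat R) : ModuleCat R :=
  ((Ext R (ModuleCat R) n).obj (Opposite.op N)).obj M

/-- `M` is a canonical module of the local ring `R` if it is finitely generated and
`Ext^i(k, M)` vanishes for `i ≠ dim R` and is isomorphic to the residue field `k`
for `i = dim R`. -/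
def IsCanonicalModule (R : Type) [CommRing R] [IsLocalRing R]
    (M : Type) [AddCommGroup M] [Module R M] : Prop :=
  Module.Finite R M ∧
  (∀ i : ℕ, (i : WithBot ℕ∞) ≠ ringKrullDim R →
    Subsingleton (extModule R i (ModuleCat.of R (ResidueField R)) (ModuleCat.of R M))) ∧
  (∀ i : ℕ, (i : WithBot ℕ∞) = ringKrullDim R →
    Nonempty (extModule R i (ModuleCat.of R (ResidueField R)) (ModuleCat.of R M)
      ≅ ModuleCat.of R (ResidueField R)))

lemma greedy_choice {m : ℕ} : ∀ (n : ℕ) (S : Fin n → Finset (Fin m)),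
    (∀ i : Fin n, (S i).card + (i : ℕ) < m) →
    ∃ k : Fin n → Fin m, Function.Injective k ∧ ∀ i, k i ∉ S i := by
  intro n
  induction n with
  | zero => exact fun S _ => ⟨Fin.elim0, fun i => i.elim0, fun i => i.elim0⟩
  | succ n ih =>
    intro S hS
    have h0 : (S 0).card < m := by simpa using hS 0
    have hex : ∃ a : Fin m, a ∉ S 0 := by
      by_contra h
      push_neg at h
      have hsub : (Finset.univ : Finset (Fin m)) ⊆ S 0 := fun a _ => h a
      have := Finset.card_le_card hsub
      simp [Finset.card_univ] at this
      omega
    obtain ⟨a, ha⟩ := hex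
    obtain ⟨k', hk'inj, hk'⟩ := ih (fun i => insert a (S i.succ)) (by
      intro i
      have h1 := hS i.succ
      have h2 := Finset.card_insert_le a (S i.succ)
      show (insert a (S i.succ)).card + (i : ℕ) < m
      simp only [Fin.val_succ] at h1
      omega)
    refine ⟨Fin.cons a k', ?_, ?_⟩
    · rw [Fin.cons_injective_iff]
      refine ⟨?_, hk'inj⟩
      rintro ⟨i, hi⟩
      exact hk' i (by rw [hi]; exact Finset.mem_insert_self a _)
    · intro i
      refine Fin.cases ?_ ?_ i
      · simpa using ha
      · intro i
        have := hk' i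
        simp only [Finset.mem_insert, not_or] at this
        simpa using this.2

lemma exists_k {m n : ℕ} (hn : n < m) (t : Fin n → Fin m) :
    ∃ k : Fin n → Fin m, Function.Injective k ∧ ∀ i l : Fin n, i ≤ l → k i ≠ t l := by
  have hcard : ∀ i : Fin n,
      ((Finset.univ.filter (fun l : Fin n => i ≤ l)).image t).card + (i : ℕ) < m := by
    intro i
    have h1 : ((Finset.univ.filter (fun l : Fin n => i ≤ l)).image t).card
        ≤ (Finset.univ.filter (fun l : Fin n => i ≤ l)).card := Finset.card_image_le
    have hsub : Finset.univ.filter (fun l : Fin n => i ≤ l) ⊆ Finset.Ici i :=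
      fun x hx => Finset.mem_Ici.2 (Finset.mem_filter.1 hx).2
    have h2 := Finset.card_le_card hsub
    rw [Fin.card_Ici] at h2
    have hi : (i : ℕ) < n := i.isLt
    omega
  obtain ⟨k, hinj, hk⟩ := greedy_choice n
      (fun i => (Finset.univ.filter (fun l : Fin n => i ≤ l)).image t) hcard
  refine ⟨k, hinj, fun i l hle hne => hk i ?_⟩
  exact Finset.mem_image.2 ⟨l, Finset.mem_filter.2 ⟨Finset.mem_univ _, hle⟩, hne.symm⟩

lemma prod_mem_fitt {R : Type} [CommRing R] {m : ℕ} (f : Fin m → R) (j : ℕ)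
    (hj : 1 ≤ j) (hjm : j ≤ m) (t : Fin (m - j) → Fin m) :
    (∏ l, f (t l)) ∈ fittingIdeal m f j := by
  have hn : m - j < m := by omega
  obtain ⟨k, hinj, hk⟩ := exists_k hn t
  refine Ideal.subset_span ?_
  refine ⟨fun l i => (if i = k l then f (t l) else 0) - (if i = t l then f (k l) else 0),
    ?_, k, ?_⟩
  · intro l
    simp only [smul_eq_mul, sub_mul, Finset.sum_sub_distrib, ite_mul, zero_mul]
    rw [Finset.sum_ite_eq' Finset.univ (k l) (fun i => f (t l) * f i)]
    rw [Finset.sum_ite_eq' Finset.univ (t l) (fun i => f (k l) * f i)]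
    simp [mul_comm]
  · have htri : Matrix.BlockTriangular
        (Matrix.of fun i l : Fin (m - j) =>
          (if k i = k (l : Fin (m - j)) then f (t l) else 0) -
          (if k i = t l then f (k l) else 0)) OrderDual.toDual := by
      intro i l hlt
      have hil : i < l := hlt
      have h1 : k i ≠ k l := fun h => (ne_of_lt hil) (hinj h)
      have h2 : k i ≠ t l := hk i l hil.le
      simp only [Matrix.of_apply]
      rw [if_neg h1, if_neg h2, sub_zero]
    have hdet := Matrix.det_of_lowerTriangular _ htri
    rw [hdet]
    refine Finset.prod_congr rfl fun l _ => ?_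
    simp [hk l l le_rfl]

lemma pow_le_span_prods {R : Type} [CommRing R] {m : ℕ} (f : Fin m → R) (n : ℕ) :
    (Ideal.span (Set.range f)) ^ n ≤
      Ideal.span {x : R | ∃ t : Fin n → Fin m, x = ∏ l, f (t l)} := by
  induction n with
  | zero =>
    rw [pow_zero, Ideal.one_eq_top, top_le_iff, Ideal.eq_top_iff_one]
    exact Ideal.subset_span ⟨Fin.elim0, by simp⟩
  | succ n ih =>
    rw [pow_succ]
    calc (Ideal.span (Set.range f)) ^ n * Ideal.span (Set.range f)
        ≤ Ideal.span {x : R | ∃ t : Fin n → Fin m, x = ∏ l, f (t l)} *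
            Ideal.span (Set.range f) := Ideal.mul_mono ih le_rfl
      _ ≤ Ideal.span {x : R | ∃ t : Fin (n + 1) → Fin m, x = ∏ l, f (t l)} := by
          rw [Ideal.span_mul_span']
          refine Ideal.span_le.2 ?_
          rintro x hx
          obtain ⟨a, ha, b, hb, rfl⟩ := Set.mem_mul.1 hx
          obtain ⟨t, rfl⟩ := ha
          obtain ⟨i, rfl⟩ := hb
          exact Ideal.subset_span ⟨Fin.snoc t i, by
            rw [Fin.prod_univ_castSucc]
            simp⟩

theorem power_le_fittingIdeal {R : Type} [CommRing R] [IsNoetherianRing R]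
    (I : Ideal R) (m : ℕ) (f : Fin m → R) (hf : Ideal.span (Set.range f) = I)
    (j : ℕ) (h1 : 1 ≤ j) (h2 : j ≤ m) :
    I ^ (m - j) ≤ fittingIdeal m f j := by
  subst hf
  calc (Ideal.span (Set.range f)) ^ (m - j)
      ≤ Ideal.span {x : R | ∃ t : Fin (m - j) → Fin m, x = ∏ l, f (t l)} :=
        pow_le_span_prods f (m - j)
    _ ≤ fittingIdeal m f j := by
        refine Ideal.span_le.2 ?_
        rintro x ⟨t, rfl⟩
        exact prod_mem_fitt f j h1 h2 t
end

section
/- Let R be a Noetherian ring and I an ideal generated by a regular sequence f_1,…,f_m. Then Fitt_j(I) = I^(m-j) for all 1 ≤ j ≤ m. -/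
open Ideal IsLocalRing

open Pointwise in
private lemma FittAux.relation_mem_span {R : Type} [CommRing R] :
    ∀ (m : ℕ) (f : Fin m → R), RingTheory.Sequence.IsWeaklyRegular R (List.ofFn f) →
    ∀ c : Fin m → R, (∑ i, c i * f i = 0) → ∀ i, c i ∈ Ideal.span (Set.range f) := by
  intro m
  induction m with
  | zero => intro f _ c _ i; exact i.elim0
  | succ m ih =>
    intro f hreg c hc i
    set f' : Fin m → R := f ∘ Fin.castSucc with hf'
    have hsets : {r | r ∈ List.ofFn f'} = Set.range f' := by
      ext x; simp [List.mem_ofFn]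
    have hspan : Ideal.ofList (List.ofFn f') = Ideal.span (Set.range f') := by
      rw [Ideal.ofList, hsets]
    have htake : (List.ofFn f).take m = List.ofFn f' := by
      apply List.ext_getElem
      · simp
      · intro n h1 h2
        rw [List.getElem_take, List.getElem_ofFn, List.getElem_ofFn]
        rfl
    have hlastreg : IsSMulRegular (R ⧸ (Ideal.span (Set.range f') • (⊤ : Submodule R R)))
        (f (Fin.last m)) := by
      have h0 := hreg.regular_mod_prev m (by simp)
      rw [htake, hspan] at h0
      have he : (List.ofFn f)[m]'(by simp) = f (Fin.last m) := by
        rw [List.getElem_ofFn]; rfl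
      rwa [he] at h0
    have hsmul : (Ideal.span (Set.range f') • (⊤ : Submodule R R)) =
        (Ideal.span (Set.range f') : Submodule R R) := by
      rw [Ideal.smul_eq_mul, Ideal.mul_top]
    rw [hsmul] at hlastreg
    have hsum : ∑ i : Fin m, c i.castSucc * f' i + c (Fin.last m) * f (Fin.last m) = 0 := by
      rw [← hc, Fin.sum_univ_castSucc]; rfl
    have hkey : c (Fin.last m) ∈ Ideal.span (Set.range f') := by
      have hmem : f (Fin.last m) • c (Fin.last m) ∈ Ideal.span (Set.range f') := by
        have : f (Fin.last m) * c (Fin.last m) = -∑ i : Fin m, c i.castSucc * f' i := by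
          linear_combination hsum
        rw [smul_eq_mul, this]
        exact neg_mem (Ideal.sum_mem _ fun i _ =>
          Ideal.mul_mem_left _ _ (Ideal.subset_span ⟨i, rfl⟩))
      have hz : f (Fin.last m) • (Ideal.Quotient.mk (Ideal.span (Set.range f'))
          (c (Fin.last m))) = 0 := by
        rw [show ((Ideal.Quotient.mk (Ideal.span (Set.range f'))) (c (Fin.last m))) =
          Submodule.Quotient.mk (c (Fin.last m)) from rfl, ← Submodule.Quotient.mk_smul,
          Submodule.Quotient.mk_eq_zero]
        exact hmem
      have := hlastreg (hz.trans (smul_zero _).symm)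
      rwa [Ideal.Quotient.eq_zero_iff_mem] at this
    obtain ⟨d, hd⟩ := (Submodule.mem_span_range_iff_exists_fun R).mp hkey
    have hrel : ∑ k : Fin m, (c k.castSucc + d k * f (Fin.last m)) * f' k = 0 := by
      have hd' : ∑ k : Fin m, d k * f' k = c (Fin.last m) := by
        simpa [smul_eq_mul] using hd
      calc ∑ k : Fin m, (c k.castSucc + d k * f (Fin.last m)) * f' k
          = ∑ i : Fin m, c i.castSucc * f' i
            + (∑ k : Fin m, d k * f' k) * f (Fin.last m) := by
            rw [Finset.sum_mul, ← Finset.sum_add_distrib]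
            exact Finset.sum_congr rfl fun x _ => by ring
        _ = 0 := by rw [hd']; exact hsum
    have hreg' : RingTheory.Sequence.IsWeaklyRegular R (List.ofFn f') := by
      constructor
      intro k hk
      have hk' : k < (List.ofFn f).length := by
        simp only [List.length_ofFn] at hk ⊢; omega
      have h0 := hreg.regular_mod_prev k hk'
      have ht : (List.ofFn f').take k = (List.ofFn f).take k := by
        rw [← htake, List.take_take]
        congr 1
        simp only [List.length_ofFn] at hk; omega
      have he : (List.ofFn f')[k]'hk = (List.ofFn f)[k]'hk' := by
        rw [List.getElem_ofFn, List.getElem_ofFn]; rfl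
      rw [ht, he]
      exact h0
    have hIH := ih f' hreg' _ hrel
    have hsub : Ideal.span (Set.range f') ≤ Ideal.span (Set.range f) :=
      Ideal.span_mono (by rintro x ⟨k, rfl⟩; exact ⟨k.castSucc, rfl⟩)
    have hflast : f (Fin.last m) ∈ Ideal.span (Set.range f) :=
      Ideal.subset_span ⟨Fin.last m, rfl⟩
    refine Fin.lastCases ?_ ?_ i
    · exact hsub hkey
    · intro k
      have h1 := hsub (hIH k)
      have h2 : d k * f (Fin.last m) ∈ Ideal.span (Set.range f) :=
        Ideal.mul_mem_left _ _ hflast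
      have : c k.castSucc = (c k.castSucc + d k * f (Fin.last m)) - d k * f (Fin.last m) := by
        ring
      rw [this]
      exact sub_mem h1 h2

private lemma FittAux.exists_good_rows {m : ℕ} :
    ∀ (k : ℕ) (S : Finset (Fin m)) (i : Fin k → Fin m), k + S.card < m →
    ∃ b : Fin k → Fin m, Function.Injective b ∧ (∀ u, b u ∉ S) ∧
      ∀ t l : Fin k, l ≤ t → b t ≠ i l := by
  intro k
  induction k with
  | zero =>
    intro S i _
    exact ⟨fun u => u.elim0, fun u => u.elim0, fun u => u.elim0, fun t => t.elim0⟩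
  | succ k ih =>
    intro S i h
    set T : Finset (Fin m) := S ∪ Finset.image i Finset.univ with hT
    have hTcard : T.card < m := by
      calc T.card ≤ S.card + (Finset.image i Finset.univ).card := Finset.card_union_le _ _
        _ ≤ S.card + (k + 1) := by
            gcongr
            exact (Finset.card_image_le).trans (by simp)
        _ < m := by omega
    have : Tᶜ.Nonempty := by
      rw [← Finset.card_pos, Finset.card_compl, Fintype.card_fin]
      omega
    obtain ⟨bk, hbk⟩ := this
    rw [Finset.mem_compl, hT, Finset.mem_union, not_or] at hbk
    obtain ⟨hbkS, hbki⟩ := hbk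
    have hbki' : ∀ l : Fin (k + 1), bk ≠ i l := by
      intro l hl
      exact hbki (Finset.mem_image.mpr ⟨l, Finset.mem_univ _, hl.symm⟩)
    obtain ⟨b', hinj, hS, htri⟩ := ih (insert bk S) (i ∘ Fin.castSucc)
      (by rw [Finset.card_insert_of_notMem hbkS]; omega)
    have hb'bk : ∀ u, b' u ≠ bk := fun u hh =>
      hS u (by rw [hh]; exact Finset.mem_insert_self _ _)
    refine ⟨Fin.snoc b' bk, ?_, ?_, ?_⟩
    · intro u v
      refine Fin.lastCases ?_ (fun u' => ?_) u
      · refine Fin.lastCases ?_ (fun v' => ?_) v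
        · intro _; rfl
        · intro h'
          rw [Fin.snoc_last, Fin.snoc_castSucc] at h'
          exact absurd h'.symm (hb'bk v')
      · refine Fin.lastCases ?_ (fun v' => ?_) v
        · intro h'
          rw [Fin.snoc_last, Fin.snoc_castSucc] at h'
          exact absurd h' (hb'bk u')
        · intro h'
          rw [Fin.snoc_castSucc, Fin.snoc_castSucc] at h'
          exact congrArg Fin.castSucc (hinj h')
    · intro u
      refine Fin.lastCases ?_ (fun u' => ?_) u
      · rw [Fin.snoc_last]; exact hbkS
      · rw [Fin.snoc_castSucc]
        exact fun hh => hS u' (Finset.mem_insert_of_mem hh)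
    · intro t l
      refine Fin.lastCases ?_ (fun t' => ?_) t
      · intro _
        rw [Fin.snoc_last]
        exact hbki' l
      · intro hlt
        rw [Fin.snoc_castSucc]
        have hl : l ≠ Fin.last k := by
          intro hh
          rw [hh] at hlt
          exact absurd (lt_of_le_of_lt hlt (Fin.castSucc_lt_last t')) (lt_irrefl _)
        obtain ⟨l', rfl⟩ := Fin.exists_castSucc_eq.mpr hl
        exact htri t' l' (by exact_mod_cast hlt)

private lemma FittAux.prod_mem_fitting {R : Type} [CommRing R] {m : ℕ} (f : Fin m → R) (j : ℕ)
    (hk : m - j < m) (i : Fin (m - j) → Fin m) :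
    (∏ t, f (i t)) ∈ fittingIdeal m f j := by
  obtain ⟨b, hinj, -, htri⟩ := FittAux.exists_good_rows (m - j) ∅ i (by simpa using hk)
  set c : Fin (m - j) → Fin m → R := fun l x =>
    (if x = b l then f (i l) else 0) - (if x = i l then f (b l) else 0) with hcdef
  have hrel : ∀ l, ∑ x, c l x • f x = 0 := by
    intro l
    simp only [hcdef, smul_eq_mul, sub_mul, Finset.sum_sub_distrib, ite_mul, zero_mul]
    rw [Finset.sum_ite_eq' Finset.univ (b l), Finset.sum_ite_eq' Finset.univ (i l)]
    simp [mul_comm]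
  have hM : (Matrix.of fun t l => c l (b t)).det = ∏ t, f (i t) := by
    have hut : (Matrix.of fun t l => c l (b t)).BlockTriangular id := by
      intro t l hlt
      simp only [Matrix.of_apply, hcdef, id_eq] at hlt ⊢
      rw [if_neg, if_neg, sub_zero]
      · exact htri t l (le_of_lt hlt)
      · exact fun hh => absurd (hinj hh) (ne_of_gt hlt)
    rw [Matrix.det_of_upperTriangular hut]
    apply Finset.prod_congr rfl
    intro t _
    simp [hcdef, htri t t le_rfl]
  exact hM ▸ Ideal.subset_span ⟨c, hrel, b, rfl⟩

open Pointwise in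
private lemma FittAux.pow_le_span_products {R : Type} [CommRing R] {m : ℕ} (f : Fin m → R) :
    ∀ k : ℕ, (Ideal.span (Set.range f)) ^ k ≤
      Ideal.span {x : R | ∃ i : Fin k → Fin m, x = ∏ t, f (i t)} := by
  intro k
  induction k with
  | zero =>
    rw [pow_zero, Ideal.one_eq_top, top_le_iff, Ideal.eq_top_iff_one]
    exact Ideal.subset_span ⟨fun t => t.elim0, by simp⟩
  | succ k ih =>
    rw [pow_succ]
    calc (Ideal.span (Set.range f)) ^ k * Ideal.span (Set.range f)
        ≤ Ideal.span {x : R | ∃ i : Fin k → Fin m, x = ∏ t, f (i t)} *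
          Ideal.span (Set.range f) := Ideal.mul_mono_left ih
      _ = Ideal.span ({x : R | ∃ i : Fin k → Fin m, x = ∏ t, f (i t)} *
          Set.range f) := Ideal.span_mul_span' _ _
      _ ≤ Ideal.span {x : R | ∃ i : Fin (k + 1) → Fin m, x = ∏ t, f (i t)} := by
          apply Ideal.span_mono
          rintro z ⟨a, ⟨ia, rfl⟩, b, ⟨a0, rfl⟩, rfl⟩
          exact ⟨Fin.cons a0 ia, by rw [Fin.prod_univ_succ]; simp [mul_comm]⟩


theorem fittingIdeal_eq_pow_of_regular {R : Type} [CommRing R] [IsNoetherianRing R]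
    (I : Ideal R) (m : ℕ) (f : Fin m → R) (hf : Ideal.span (Set.range f) = I)
    (hreg : RingTheory.Sequence.IsRegular R (List.ofFn f))
    (j : ℕ) (h1 : 1 ≤ j) (h2 : j ≤ m) :
    fittingIdeal m f j = I ^ (m - j) := by
  apply le_antisymm
  · -- Fitting ideal ⊆ I ^ (m - j)
    rw [fittingIdeal, Ideal.span_le]
    rintro x ⟨c, hcrel, r, rfl⟩
    rw [SetLike.mem_coe, Matrix.det_apply]
    apply Submodule.sum_mem
    intro σ _
    rw [Units.smul_def]
    apply zsmul_mem
    have hprod : (I : Ideal R) ^ (m - j) = ∏ _t : Fin (m - j), I := by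
      rw [Finset.prod_const, Finset.card_univ, Fintype.card_fin]
    rw [hprod]
    apply Ideal.prod_mem_prod
    intro t _
    simp only [Matrix.of_apply]
    rw [← hf]
    exact FittAux.relation_mem_span m f hreg.toIsWeaklyRegular (c t)
      (by simpa [smul_eq_mul] using hcrel t) _
  · -- I ^ (m - j) ⊆ Fitting ideal
    have hk : m - j < m := by omega
    rw [← hf]
    refine le_trans (FittAux.pow_le_span_products f (m - j)) ?_
    rw [Ideal.span_le]
    rintro x ⟨i, rfl⟩
    exact FittAux.prod_mem_fitting f j hk i
end

section
/- Let (R,m) be a Noetherian local ring with maximal ideal m minimally generated by μ elements. Then Fitt_j(m) = m^(μ-j) for all 1 ≤ j ≤ μ. -/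
open Ideal IsLocalRing

section Aux
open Pointwise

lemma detMemPow {R : Type} [CommRing R] {n : ℕ} (M : Matrix (Fin n) (Fin n) R) (I : Ideal R)
    (h : ∀ i j, M i j ∈ I) : M.det ∈ I ^ n := by
  rw [Matrix.det_apply]
  refine Submodule.sum_mem _ fun σ _ => ?_
  have hp : ∏ i, M (σ i) i ∈ I ^ n := by
    have := Ideal.prod_mem_prod (s := (Finset.univ : Finset (Fin n))) (I := fun _ => I)
      (x := fun i => M (σ i) i) (fun i _ => h (σ i) i)
    simpa using this
  rw [Units.smul_def, zsmul_eq_mul]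
  exact Ideal.mul_mem_left _ _ hp

lemma coeffMem {R : Type} [CommRing R] [IsLocalRing R] {μ : ℕ} (f : Fin μ → R)
    (hf : Ideal.span (Set.range f) = maximalIdeal R)
    (hmin : ∀ (k : ℕ) (g : Fin k → R), Ideal.span (Set.range g) = maximalIdeal R → μ ≤ k)
    (c : Fin μ → R) (hc : ∑ i, c i • f i = 0) (i : Fin μ) : c i ∈ maximalIdeal R := by
  by_contra hmem
  have hu : IsUnit (c i) := by
    by_contra h
    exact hmem ((IsLocalRing.mem_maximalIdeal _).2 h)
  cases μ with
  | zero => exact i.elim0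
  | succ n =>
    set g : Fin n → R := f ∘ i.succAbove with hg
    have hgsub : Set.range g ⊆ (Ideal.span (Set.range g) : Set R) := Ideal.subset_span
    have hspan : Ideal.span (Set.range g) = maximalIdeal R := by
      apply le_antisymm
      · rw [← hf]
        apply Ideal.span_le.2
        rintro x ⟨l, rfl⟩
        exact Ideal.subset_span ⟨i.succAbove l, rfl⟩
      · rw [← hf]
        apply Ideal.span_le.2
        rintro x ⟨k, rfl⟩
        by_cases hk : k = i
        · subst hk
          have hsum : c k • f k + ∑ x ∈ Finset.univ.erase k, c x • f x = 0 := by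
            rw [Finset.add_sum_erase Finset.univ (fun x => c x • f x) (Finset.mem_univ k)]; exact hc
          have h1 : c k * f k ∈ Ideal.span (Set.range g) := by
            have : c k • f k = -∑ x ∈ Finset.univ.erase k, c x • f x :=
              eq_neg_of_add_eq_zero_left hsum
            rw [smul_eq_mul] at this
            rw [this]
            refine Submodule.neg_mem _ (Submodule.sum_mem _ fun x hx => ?_)
            have hxk : x ≠ k := Finset.ne_of_mem_erase hx
            obtain ⟨l, hl⟩ := Fin.exists_succAbove_eq hxk
            rw [smul_eq_mul]
            exact Ideal.mul_mem_left _ _ (Ideal.subset_span ⟨l, by rw [hg]; simp [hl]⟩)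
          have : f k = ↑hu.unit⁻¹ * (c k * f k) := by
            rw [← mul_assoc, IsUnit.val_inv_mul, one_mul]
          rw [this]
          exact Ideal.mul_mem_left _ _ h1
        · obtain ⟨l, hl⟩ := Fin.exists_succAbove_eq hk
          exact Ideal.subset_span ⟨l, by rw [hg]; simp [hl]⟩
    have := hmin n g hspan
    omega


lemma keyDet {R : Type} [CommRing R] {μ : ℕ} (f : Fin μ → R) :
    ∀ (d : ℕ) (S : Finset (Fin μ)), d < S.card → ∀ (a : Fin d → Fin μ), (∀ i, a i ∈ S) →
    ∃ (c : Fin d → (Fin μ → R)) (r : Fin d → Fin μ),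
      (∀ l, ∑ i, c l i • f i = 0) ∧ (∀ l x, x ∉ S → c l x = 0) ∧
      (Matrix.of fun i l => c l (r i)).det = ∏ i, f (a i) := by
  intro d
  induction d with
  | zero =>
    intro S _ a _
    exact ⟨finZeroElim, finZeroElim, fun l => l.elim0, fun l => l.elim0, by
      simp [Matrix.det_fin_zero]⟩
  | succ d ih =>
    intro S hS a ha
    -- find t ∈ S not in range of a
    have hex : ∃ t ∈ S, t ∉ Finset.image a Finset.univ := by
      by_contra h
      push_neg at h
      have hsub : S ⊆ Finset.image a Finset.univ := fun x hx => h x hx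
      have := Finset.card_le_card hsub
      have h2 := Finset.card_image_le (s := (Finset.univ : Finset (Fin (d+1)))) (f := a)
      simp at h2
      omega
    obtain ⟨t, htS, htn⟩ := hex
    have hat : ∀ i, a i ≠ t := by
      intro i h
      exact htn (Finset.mem_image.2 ⟨i, Finset.mem_univ i, h⟩)
    have hcard : d < (S.erase t).card := by
      rw [Finset.card_erase_of_mem htS]; omega
    obtain ⟨c', r', hrel', hsupp', hdet'⟩ := ih (S.erase t) hcard (fun i => a i.succ)
      (fun i => Finset.mem_erase.2 ⟨hat _, ha _⟩)
    set c0 : Fin μ → R := Pi.single t (f (a 0)) - Pi.single (a 0) (f t) with hc0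
    refine ⟨Fin.cases c0 c', Fin.cases t r', ?_, ?_, ?_⟩
    · intro l
      refine Fin.cases ?_ (fun l => by simpa using hrel' l) l
      simp only [Fin.cases_zero, hc0, Pi.sub_apply, Pi.single_apply, smul_eq_mul, sub_mul,
        ite_mul, zero_mul, Finset.sum_sub_distrib, Finset.sum_ite_eq', Finset.mem_univ, if_true]
      ring
    · intro l x hx
      refine Fin.cases ?_ (fun l => ?_) l
      · simp only [Fin.cases_zero, hc0, Pi.sub_apply]
        rw [Pi.single_apply, Pi.single_apply, if_neg, if_neg, sub_zero]
        · exact fun h => hx (h ▸ ha 0)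
        · exact fun h => hx (h ▸ htS)
      · simp only [Fin.cases_succ]
        exact hsupp' l x (fun h => hx (Finset.mem_of_mem_erase h))
    · rw [Matrix.det_succ_row_zero]
      rw [Finset.sum_eq_single (0 : Fin (d+1))]
      · have h00 : (Matrix.of fun i l => (Fin.cases c0 c' l : Fin μ → R) ((Fin.cases t r' : Fin (d+1) → Fin μ) i)) 0 0 = f (a 0) := by
          simp only [Matrix.of_apply, Fin.cases_zero, hc0, Pi.sub_apply]
          rw [Pi.single_apply, Pi.single_apply, if_pos rfl, if_neg (Ne.symm (hat 0)), sub_zero]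
        rw [h00]
        have hsub : ((Matrix.of fun i l => (Fin.cases c0 c' l : Fin μ → R) ((Fin.cases t r' : Fin (d+1) → Fin μ) i)).submatrix Fin.succ (Fin.succAbove 0))
            = Matrix.of fun i l => c' l (r' i) := by
          ext i l
          simp [Matrix.submatrix_apply, Fin.zero_succAbove]
        rw [hsub, hdet', Fin.prod_univ_succ]
        simp
      · intro b _ hb
        obtain ⟨l, rfl⟩ := Fin.eq_succ_of_ne_zero hb
        have : (Matrix.of fun i l => (Fin.cases c0 c' l : Fin μ → R) ((Fin.cases t r' : Fin (d+1) → Fin μ) i)) 0 l.succ = 0 := by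
          simp only [Matrix.of_apply, Fin.cases_succ, Fin.cases_zero]
          exact hsupp' l t (by simp)
        rw [this]; ring
      · intro h
        exact absurd (Finset.mem_univ _) h


lemma powLeMono {R : Type} [CommRing R] {μ : ℕ} (f : Fin μ → R) :
    ∀ d : ℕ, (Ideal.span (Set.range f)) ^ d ≤
      Ideal.span { x : R | ∃ a : Fin d → Fin μ, x = ∏ i, f (a i) } := by
  intro d
  induction d with
  | zero =>
    rw [pow_zero, Ideal.one_eq_top]
    exact top_le_iff.2 ((Ideal.eq_top_iff_one _).2 (Ideal.subset_span ⟨finZeroElim, by simp⟩))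
  | succ d ih =>
    rw [pow_succ]
    calc (Ideal.span (Set.range f)) ^ d * Ideal.span (Set.range f)
        ≤ Ideal.span { x : R | ∃ a : Fin d → Fin μ, x = ∏ i, f (a i) } *
          Ideal.span (Set.range f) := Ideal.mul_mono ih le_rfl
      _ = Ideal.span ({ x : R | ∃ a : Fin d → Fin μ, x = ∏ i, f (a i) } * Set.range f) :=
          Ideal.span_mul_span' _ _
      _ ≤ _ := by
          apply Ideal.span_le.2
          rintro z hz
          rw [Set.mem_mul] at hz
          obtain ⟨x, ⟨a, rfl⟩, y, ⟨k, rfl⟩, rfl⟩ := hz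
          refine Ideal.subset_span ⟨Fin.cons k a, ?_⟩
          rw [Fin.prod_univ_succ]
          simp [mul_comm]

end Aux

theorem fittingIdeal_maximalIdeal {R : Type} [CommRing R] [IsNoetherianRing R] [IsLocalRing R]
    (μ : ℕ) (f : Fin μ → R) (hf : Ideal.span (Set.range f) = maximalIdeal R)
    (hmin : ∀ (k : ℕ) (g : Fin k → R), Ideal.span (Set.range g) = maximalIdeal R → μ ≤ k)
    (j : ℕ) (h1 : 1 ≤ j) (h2 : j ≤ μ) :
    fittingIdeal μ f j = (maximalIdeal R) ^ (μ - j) := by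
  apply le_antisymm
  · apply Ideal.span_le.2
    rintro x ⟨c, hrel, r, rfl⟩
    exact detMemPow _ _ (fun i l => coeffMem f hf hmin (c l) (hrel l) (r i))
  · rw [← hf]
    refine le_trans (powLeMono f (μ - j)) (Ideal.span_le.2 ?_)
    rintro x ⟨a, rfl⟩
    obtain ⟨c, r, hrel, -, hdet⟩ := keyDet f (μ - j) Finset.univ
      (by simpa using Nat.sub_lt (by omega) (by omega)) a (fun i => Finset.mem_univ _)
    exact Ideal.subset_span ⟨c, hrel, r, hdet.symm⟩
end

section
/- Let R be a regular Noetherian ring and m a maximal ideal of R with dim R_m = d ≥ 2. Then Fitt_{d−1}(m) = m. -/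
open Ideal IsLocalRing

section FittAux

variable {R : Type} [CommRing R]

private lemma fitt_det_mem {m : ℕ} (f : Fin m → R) (j : ℕ)
    (c : Fin (m - j) → Fin m → R) (hc : ∀ l, ∑ i, c l i * f i = 0)
    (r : Fin (m - j) → Fin m) :
    (Matrix.of fun i l => c l (r i)).det ∈ fittingIdeal m f j :=
  Ideal.subset_span ⟨c, fun l => by simpa [smul_eq_mul] using hc l, r, rfl⟩

private lemma span_image_exists {m : ℕ} (f : Fin m → R) (T : Finset (Fin m)) {a : R}
    (ha : a ∈ Ideal.span (f '' ↑T)) :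
    ∃ r : Fin m → R, (∀ i, i ∉ T → r i = 0) ∧ a = ∑ i, r i * f i := by
  induction ha using Submodule.span_induction with
  | mem x hx =>
      obtain ⟨i, hi, rfl⟩ := hx
      refine ⟨fun t => if t = i then 1 else 0,
        fun t ht => if_neg (by rintro rfl; exact ht hi), ?_⟩
      simp [ite_mul, Finset.sum_ite_eq']
  | zero => exact ⟨0, fun _ _ => rfl, by simp⟩
  | add x y hx hy ihx ihy =>
      obtain ⟨r1, h1, rfl⟩ := ihx; obtain ⟨r2, h2, rfl⟩ := ihy
      exact ⟨r1 + r2, fun i hi => by simp [h1 i hi, h2 i hi],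
        by rw [← Finset.sum_add_distrib]; simp [add_mul]⟩
  | smul c x hx ih =>
      obtain ⟨r1, h1, rfl⟩ := ih
      exact ⟨fun i => c * r1 i, fun i hi => by simp [h1 i hi],
        by rw [smul_eq_mul, Finset.mul_sum]; simp [mul_assoc]⟩

private lemma fitt_core {m d : ℕ} (hd1 : 1 ≤ d) (hdm : d ≤ m) (f : Fin m → R)
    (T : Finset (Fin m)) (hT : T.card = d)
    (ρ : Fin m → Fin m → R)
    (hρrel : ∀ j ∈ Tᶜ, ∑ i, ρ j i * f i = 0)
    (hρ0 : ∀ j ∈ Tᶜ, ∀ t ∈ Tᶜ, t ≠ j → ρ j t = 0)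
    (σ : Fin m → R) (hσrel : ∑ i, σ i * f i = 0)
    (hσ0 : ∀ t ∈ Tᶜ, σ t = 0)
    {i' : Fin m} (hi' : i' ∈ T) :
    (∏ j ∈ Tᶜ, ρ j j) * σ i' ∈ fittingIdeal m f (d - 1) := by
  classical
  set k := Tᶜ.card with hkdef
  have hkcard : k = m - d := by
    rw [hkdef, Finset.card_compl, hT, Fintype.card_fin]
  have hs : m - (d - 1) = k + 1 := by omega
  set e := Tᶜ.orderIsoOfFin hkdef.symm with hedef
  set E : Fin k → Fin m := fun l => (e l : Fin m) with hEdef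
  have hEmem : ∀ l, E l ∈ Tᶜ := fun l => (e l).2
  have hEinj : Function.Injective E := fun a b hab => e.injective (Subtype.ext hab)
  set ρf : Fin (k + 1) → Fin m → R := Fin.snoc (fun l => ρ (E l)) σ with hρf
  set rr : Fin (k + 1) → Fin m := Fin.snoc E i' with hrr
  set M : Matrix (Fin (k + 1)) (Fin (k + 1)) R := Matrix.of fun i l => ρf l (rr i) with hM
  have hrel : ∀ l : Fin (k + 1), ∑ i, ρf l i * f i = 0 := by
    intro l
    induction l using Fin.lastCases with
    | last => simpa [hρf, Fin.snoc_last] using hσrel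
    | cast l0 => simpa [hρf, Fin.snoc_castSucc] using hρrel (E l0) (hEmem l0)
  have hmem := fitt_det_mem f (d - 1) (fun l => ρf (Fin.cast hs l))
    (fun l => hrel _) (fun i => rr (Fin.cast hs i))
  have hsub : (Matrix.of fun i l => (fun l => ρf (Fin.cast hs l)) l
      ((fun i => rr (Fin.cast hs i)) i)) = M.submatrix (finCongr hs) (finCongr hs) := rfl
  rw [hsub, Matrix.det_submatrix_equiv_self] at hmem
  have htri : M.BlockTriangular OrderDual.toDual := by
    intro i j hij
    have hij' : i < j := hij
    show ρf j (rr i) = 0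
    induction j using Fin.lastCases with
    | last =>
        obtain ⟨i0, rfl⟩ := Fin.exists_castSucc_eq.mpr (ne_of_lt hij')
        simp only [hρf, hrr, Fin.snoc_last, Fin.snoc_castSucc]
        exact hσ0 (E i0) (hEmem i0)
    | cast j0 =>
        have hil : i ≠ Fin.last k := ne_of_lt (lt_of_lt_of_le hij' (Fin.le_last _))
        obtain ⟨i0, rfl⟩ := Fin.exists_castSucc_eq.mpr hil
        have hij0 : i0 < j0 := by
          simpa [Fin.castSucc_lt_castSucc_iff] using hij'
        simp only [hρf, hrr, Fin.snoc_castSucc]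
        exact hρ0 (E j0) (hEmem j0) (E i0) (hEmem i0)
          (fun h => (ne_of_lt hij0) (hEinj h))
  rw [Matrix.det_of_lowerTriangular M htri] at hmem
  have hdiag : ∏ i, M i i = (∏ j ∈ Tᶜ, ρ j j) * σ i' := by
    rw [Fin.prod_univ_castSucc]
    congr 1
    · calc ∏ l : Fin k, M l.castSucc l.castSucc
          = ∏ l : Fin k, ρ (E l) (E l) := by
            apply Finset.prod_congr rfl
            intro l _
            simp [hM, hρf, hrr, Fin.snoc_castSucc]
        _ = ∏ x : {y // y ∈ Tᶜ}, ρ (x : Fin m) (x : Fin m) :=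
            Equiv.prod_comp e.toEquiv (fun x => ρ (x : Fin m) (x : Fin m))
        _ = ∏ j ∈ Tᶜ, ρ j j := Finset.prod_coe_sort Tᶜ (fun j => ρ j j)
    · simp [hM, hρf, hrr, Fin.snoc_last]
  rwa [hdiag] at hmem

private lemma fitt_span {m d : ℕ} (hd : 2 ≤ d) (hdm : d ≤ m) (f : Fin m → R)
    (T : Finset (Fin m)) (hT : T.card = d)
    (ρ : Fin m → Fin m → R)
    (hρrel : ∀ j ∈ Tᶜ, ∑ i, ρ j i * f i = 0)
    (hρ0 : ∀ j ∈ Tᶜ, ∀ t ∈ Tᶜ, t ≠ j → ρ j t = 0)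
    {y : R} (hy : y ∈ Ideal.span (f '' ↑T)) :
    (∏ j ∈ Tᶜ, ρ j j) * y ∈ fittingIdeal m f (d - 1) := by
  classical
  induction hy using Submodule.span_induction with
  | mem x hx =>
      obtain ⟨i, hiT, rfl⟩ := hx
      have hiT' : i ∈ T := hiT
      obtain ⟨i', hi'T, hi'i⟩ := Finset.exists_mem_ne (by omega : 1 < T.card) i
      set σ : Fin m → R := fun t => (if t = i then f i' else 0) - (if t = i' then f i else 0)
        with hσdef
      have hσrel : ∑ t, σ t * f t = 0 := by
        simp only [hσdef, sub_mul, ite_mul, zero_mul, Finset.sum_sub_distrib,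
          Finset.sum_ite_eq']
        simp [mul_comm]
      have hσ0 : ∀ t ∈ Tᶜ, σ t = 0 := by
        intro t ht
        have h1 : t ≠ i := by rintro rfl; exact (Finset.mem_compl.mp ht) hiT'
        have h2 : t ≠ i' := by rintro rfl; exact (Finset.mem_compl.mp ht) hi'T
        simp [hσdef, h1, h2]
      have hc := fitt_core (by omega) hdm f T hT ρ hρrel hρ0 σ hσrel hσ0 hi'T
      have hσi' : σ i' = -(f i) := by simp [hσdef, hi'i]
      rw [hσi', mul_neg] at hc
      simpa using neg_mem hc
  | zero => simpa using (fittingIdeal m f (d - 1)).zero_mem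
  | add x y hx hy ihx ihy => rw [mul_add]; exact add_mem ihx ihy
  | smul a x hx ih => rw [smul_eq_mul, mul_left_comm]; exact Ideal.mul_mem_left _ a ih

end FittAux

theorem fittingIdeal_maximal_of_regular {R : Type} [CommRing R] [IsNoetherianRing R]
    (hreg : IsRegularRing' R) (P : Ideal R) [P.IsMaximal] (d : ℕ) (hd : 2 ≤ d)
    (hdim : ringKrullDim (Localization.AtPrime P) = (d : ℕ))
    (m : ℕ) (f : Fin m → R) (hf : Ideal.span (Set.range f) = P) :
    fittingIdeal m f (d - 1) = P := by
  classical
  have hPprime : P.IsPrime := Ideal.IsMaximal.isPrime inferInstance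
  obtain ⟨hnoeth, hregP⟩ := hreg P
  haveI : IsNoetherianRing (Localization.AtPrime P) := hnoeth
  set A := Localization.AtPrime P with hAdef
  have hmu : muId (maximalIdeal A) = (d : ℕ∞) := by
    have h1 : (muId (maximalIdeal A) : WithBot ℕ∞) = ((d : ℕ) : WithBot ℕ∞) := by
      rw [hregP]; exact hdim
    exact_mod_cast h1
  set F : Fin m → A := fun i => algebraMap R A (f i) with hFdef
  have hFspan : Ideal.span (Set.range F) = maximalIdeal A := by
    have h1 : Ideal.map (algebraMap R A) (Ideal.span (Set.range f))
        = Ideal.span (Set.range F) := by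
      rw [Ideal.map_span, ← Set.range_comp]
      rfl
    have h2 := congrArg (Ideal.map (algebraMap R A)) hf
    exact (h1.symm.trans h2).trans Localization.AtPrime.map_eq_maximalIdeal
  have hFmem : ∀ i, F i ∈ maximalIdeal A := fun i => hFspan ▸ Ideal.subset_span ⟨i, rfl⟩
  have hmuLe : ∀ S : Finset A, Ideal.span (S : Set A) = maximalIdeal A →
      (d : ℕ∞) ≤ S.card := by
    intro S hS
    rw [← hmu]
    exact sInf_le ⟨S, rfl, hS⟩
  have hdm : d ≤ m := by
    have h1 := hmuLe (Finset.univ.image F)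
      (by rw [Finset.coe_image, Finset.coe_univ, Set.image_univ, hFspan])
    have h2 : (Finset.univ.image F).card ≤ m := le_trans Finset.card_image_le (by simp)
    have h3 : (d : ℕ∞) ≤ (m : ℕ∞) := le_trans h1 (by exact_mod_cast h2)
    exact_mod_cast h3
  -- Part A : fittingIdeal ≤ P
  have hAle : fittingIdeal m f (d - 1) ≤ P := by
    rw [fittingIdeal]
    refine Ideal.span_le.mpr ?_
    rintro x ⟨c, hc, r, rfl⟩
    refine SetLike.mem_coe.mpr ?_
    by_cases hinj : Function.Injective r
    · by_contra hxP
      set M0 : Matrix (Fin (m - (d - 1))) (Fin (m - (d - 1))) R :=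
        Matrix.of fun i l => c l (r i) with hM0
      set MA : Matrix (Fin (m - (d - 1))) (Fin (m - (d - 1))) A :=
        (algebraMap R A).mapMatrix M0 with hMA
      have hdet : MA.det = algebraMap R A M0.det := (RingHom.map_det _ _).symm
      have hunit : IsUnit MA.det := by
        rw [hdet]
        by_contra hu
        have h1 : algebraMap R A M0.det ∈ maximalIdeal A := hu
        have h2 : M0.det ∈ P := by
          have := Ideal.mem_comap.mpr h1
          rwa [← Ideal.under_def, Localization.AtPrime.under_maximalIdeal] at this
        exact hxP h2
      haveI := MA.invertibleOfIsUnitDet hunit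
      have hrelA : ∀ l, ∑ t, algebraMap R A (c l t) * F t = 0 := by
        intro l
        have h0 : ∑ t, algebraMap R A (c l t) * algebraMap R A (f t) = 0 := by
          have h1 := congrArg (algebraMap R A) (hc l)
          simpa [smul_eq_mul, map_sum] using h1
        exact h0
      set Tr : Finset (Fin m) := (Finset.univ.image r)ᶜ with hTr
      set w : Fin (m - (d - 1)) → A :=
        fun l => -∑ t ∈ Tr, algebraMap R A (c l t) * F t with hw
      set N : Ideal A := Ideal.span (↑(Tr.image F)) with hN
      have hwmem : ∀ l, w l ∈ N := by
        intro l
        refine neg_mem (Ideal.sum_mem _ fun t ht => Ideal.mul_mem_left _ _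
          (Ideal.subset_span ?_))
        exact Finset.mem_coe.mpr (Finset.mem_image_of_mem F ht)
      have hsplit : Matrix.vecMul (fun i => F (r i)) MA = w := by
        funext l
        have h0 := hrelA l
        rw [← Finset.sum_add_sum_compl (Finset.univ.image r)] at h0
        have himg : ∑ t ∈ Finset.univ.image r, algebraMap R A (c l t) * F t
            = ∑ i, algebraMap R A (c l (r i)) * F (r i) := by
          rw [Finset.sum_image (fun a _ b _ h => hinj h)]
        rw [himg] at h0
        have hvm : Matrix.vecMul (fun i => F (r i)) MA l
            = ∑ i, algebraMap R A (c l (r i)) * F (r i) := by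
          simp only [Matrix.vecMul, dotProduct, hMA, RingHom.mapMatrix_apply,
            Matrix.map_apply, hM0, Matrix.of_apply]
          exact Finset.sum_congr rfl fun i _ => mul_comm _ _
        rw [hvm, hw]
        simp only []
        linear_combination h0
      have hvec : (fun i => F (r i)) = Matrix.vecMul w (⅟MA) := by
        rw [← hsplit, Matrix.vecMul_vecMul, mul_invOf_self, Matrix.vecMul_one]
      have hFrN : ∀ i, F (r i) ∈ N := by
        intro i
        have h1 : F (r i) = ∑ l, w l * (⅟MA) l i := congrFun hvec i
        rw [h1]
        exact Ideal.sum_mem _ fun l _ => Ideal.mul_mem_right _ _ (hwmem l)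
      have hNeq : Ideal.span (↑(Tr.image F) : Set A) = maximalIdeal A := by
        apply le_antisymm
        · rw [Ideal.span_le]
          intro x hx
          obtain ⟨t, _, rfl⟩ := Finset.mem_image.mp (Finset.mem_coe.mp hx)
          exact hFmem t
        · rw [← hFspan, Ideal.span_le]
          rintro x ⟨t, rfl⟩
          by_cases ht : t ∈ Finset.univ.image r
          · obtain ⟨i, _, rfl⟩ := Finset.mem_image.mp ht
            exact hFrN i
          · exact Ideal.subset_span
              (Finset.mem_coe.mpr (Finset.mem_image_of_mem F (Finset.mem_compl.mpr ht)))
      have hcard : (Tr.image F).card ≤ m - (m - (d - 1)) := by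
        refine le_trans Finset.card_image_le ?_
        rw [hTr, Finset.card_compl, Fintype.card_fin,
          Finset.card_image_of_injective _ hinj, Finset.card_univ, Fintype.card_fin]
      have h1 := hmuLe (Tr.image F) hNeq
      have h2 : (d : ℕ∞) ≤ ((m - (m - (d - 1)) : ℕ) : ℕ∞) :=
        le_trans h1 (by exact_mod_cast hcard)
      have h3 : d ≤ m - (m - (d - 1)) := by exact_mod_cast h2
      omega
    · simp only [Function.Injective] at hinj
      push_neg at hinj
      obtain ⟨a, b, hab, hne⟩ := hinj
      have hrow : (Matrix.of fun i l => c l (r i)) a = (Matrix.of fun i l => c l (r i)) b :=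
        funext fun l => by simp [Matrix.of_apply, hab]
      rw [Matrix.det_zero_of_row_eq hne hrow]
      exact P.zero_mem
  -- extraction of T
  obtain ⟨T, hTcard, hTspan⟩ :
      ∃ T : Finset (Fin m), T.card = d ∧ Ideal.span (F '' ↑T) = maximalIdeal A := by
    have hne : {n : ℕ∞ | ∃ s : Finset A, (s.card : ℕ∞) = n ∧
        Ideal.span (s : Set A) = maximalIdeal A}.Nonempty :=
      ⟨_, ⟨Finset.univ.image F, rfl,
        by rw [Finset.coe_image, Finset.coe_univ, Set.image_univ, hFspan]⟩⟩
    have hmem := csInf_mem hne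
    obtain ⟨G, hGcard, hGspan⟩ := hmem
    rw [show sInf {n : ℕ∞ | ∃ s : Finset A, (s.card : ℕ∞) = n ∧
      Ideal.span (s : Set A) = maximalIdeal A} = muId (maximalIdeal A) from rfl, hmu] at hGcard
    have hGcard' : G.card = d := by exact_mod_cast hGcard
    have hGsub : ∀ g ∈ G, g ∈ maximalIdeal A := fun g hg => hGspan ▸ Ideal.subset_span hg
    set F' : Fin m → maximalIdeal A := fun i => ⟨F i, hFmem i⟩ with hF'def
    set φ : Fin m → CotangentSpace A := fun i => (maximalIdeal A).toCotangent (F' i) with hφdef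
    have hspanF' : Submodule.span A (Set.range F') = ⊤ := by
      apply Submodule.map_injective_of_injective (Submodule.injective_subtype
        ((maximalIdeal A) : Submodule A A))
      rw [Submodule.map_span, Submodule.map_top, Submodule.range_subtype]
      have himg2 : (Submodule.subtype ((maximalIdeal A : Submodule A A))) '' Set.range F'
          = Set.range F := by
        ext x
        constructor
        · rintro ⟨y, ⟨i, rfl⟩, rfl⟩; exact ⟨i, rfl⟩
        · rintro ⟨i, rfl⟩; exact ⟨F' i, ⟨i, rfl⟩, rfl⟩
      rw [himg2]
      exact hFspan
    have hφspan : Submodule.span (ResidueField A) (Set.range φ) = ⊤ := by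
      have himg : Set.range φ = (maximalIdeal A).toCotangent '' (Set.range F') := by
        rw [← Set.range_comp]; rfl
      rw [himg]
      exact IsLocalRing.CotangentSpace.span_image_eq_top_iff.mpr hspanF'
    have hfinrank : Module.finrank (ResidueField A) (CotangentSpace A) ≤ d := by
      set G' : Finset ↥(maximalIdeal A) :=
        G.attach.image (fun g => (⟨g.1, hGsub g.1 g.2⟩ : maximalIdeal A)) with hG'def
      have hG'span : Submodule.span A (↑G' : Set ↥(maximalIdeal A)) = ⊤ := by
        apply Submodule.map_injective_of_injective (Submodule.injective_subtype
          ((maximalIdeal A) : Submodule A A))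
        rw [Submodule.map_span, Submodule.map_top, Submodule.range_subtype]
        have himg : (maximalIdeal A).subtype '' (↑G' : Set ↥(maximalIdeal A)) = ↑G := by
          ext x
          simp only [hG'def, Finset.coe_image, Set.mem_image, Finset.mem_coe,
            Finset.mem_image, Finset.mem_attach, true_and, Submodule.coe_subtype]
          constructor
          · rintro ⟨y, ⟨g, rfl⟩, rfl⟩; exact g.2
          · intro hx; exact ⟨⟨x, hGsub x hx⟩, ⟨⟨x, hx⟩, rfl⟩, rfl⟩
        rw [himg]
        exact hGspan
      set SS : Finset (CotangentSpace A) := G'.image ((maximalIdeal A).toCotangent) with hSS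
      have hSSspan : Submodule.span (ResidueField A) (↑SS : Set (CotangentSpace A)) = ⊤ := by
        rw [hSS, Finset.coe_image]
        exact IsLocalRing.CotangentSpace.span_image_eq_top_iff.mpr hG'span
      have h1 := finrank_span_le_card (R := ResidueField A) (↑SS : Set (CotangentSpace A))
      rw [hSSspan] at h1
      have h2 : SS.card ≤ d := by
        calc SS.card ≤ G'.card := Finset.card_image_le
          _ ≤ G.attach.card := Finset.card_image_le
          _ = d := by rw [Finset.card_attach, hGcard']
      calc Module.finrank (ResidueField A) (CotangentSpace A)
          = Module.finrank (ResidueField A) (⊤ : Submodule (ResidueField A)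
            (CotangentSpace A)) := (finrank_top _ _).symm
        _ ≤ (↑SS : Set (CotangentSpace A)).toFinset.card := h1
        _ ≤ d := by simpa using h2
    obtain ⟨b, hbsub, hbspan, hbind⟩ :=
      exists_linearIndependent (ResidueField A) (Set.range φ)
    rw [hφspan] at hbspan
    have hbfin : b.Finite := (Set.finite_range φ).subset hbsub
    haveI := hbfin.fintype
    have hbcard : Fintype.card b ≤ d := le_trans hbind.fintype_card_le_finrank hfinrank
    have hψ : ∀ v : b, ∃ i : Fin m, φ i = (v : CotangentSpace A) := fun v => hbsub v.2
    choose ψ hψspec using hψ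
    have hψinj : Function.Injective ψ := by
      intro v w h
      apply Subtype.ext
      rw [← hψspec v, ← hψspec w, h]
    set T₀ : Finset (Fin m) := Finset.univ.image ψ with hT₀def
    have hT₀card : T₀.card ≤ d := le_trans Finset.card_image_le (by simpa using hbcard)
    have hbsub' : b ⊆ φ '' ↑T₀ := by
      intro v hv
      exact ⟨ψ ⟨v, hv⟩, by simp [hT₀def], hψspec ⟨v, hv⟩⟩
    have hφT₀ : Submodule.span (ResidueField A) (φ '' ↑T₀) = ⊤ :=
      top_unique (hbspan ▸ Submodule.span_mono hbsub')
    have hspanAT₀ : Submodule.span A (F' '' ↑T₀) = ⊤ := by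
      apply IsLocalRing.CotangentSpace.span_image_eq_top_iff.mp
      rw [← Set.image_comp]
      exact hφT₀
    have hidT₀ : Ideal.span (F '' ↑T₀) = maximalIdeal A := by
      have h0 := congrArg (Submodule.map ((maximalIdeal A) : Submodule A A).subtype) hspanAT₀
      rw [Submodule.map_span, Submodule.map_top, Submodule.range_subtype,
        ← Set.image_comp] at h0
      exact h0
    obtain ⟨T, hT₀T, _, hTcard⟩ := Finset.exists_subsuperset_card_eq
      (Finset.subset_univ T₀) hT₀card (by simpa using hdm)
    refine ⟨T, hTcard, le_antisymm ?_ ?_⟩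
    · rw [Ideal.span_le]
      rintro x ⟨i, _, rfl⟩
      exact hFmem i
    · rw [← hidT₀]
      exact Ideal.span_mono (Set.image_mono (Finset.coe_subset.mpr hT₀T))
  -- relations ρ
  have hrels : ∀ j ∈ Tᶜ, ∃ ρj : Fin m → R, (∑ i, ρj i * f i = 0) ∧
      (∀ t ∈ Tᶜ, t ≠ j → ρj t = 0) ∧ ρj j ∉ P := by
    intro j hj
    have hj' : F j ∈ Ideal.map (algebraMap R A) (Ideal.span (f '' ↑T)) := by
      rw [Ideal.map_span, ← Set.image_comp]
      show F j ∈ Ideal.span (F '' ↑T)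
      rw [hTspan]; exact hFmem j
    rw [IsLocalization.mem_map_algebraMap_iff P.primeCompl] at hj'
    obtain ⟨⟨a, u⟩, hau⟩ := hj'
    rw [show F j * algebraMap R A ↑u = algebraMap R A (f j * ↑u) from (_root_.map_mul _ _ _).symm]
      at hau
    obtain ⟨ww, hww⟩ := (IsLocalization.eq_iff_exists P.primeCompl A).mp hau
    obtain ⟨rr, hrr0, hrreq⟩ := span_image_exists f T a.2
    have hjT : j ∉ T := Finset.mem_compl.mp hj
    refine ⟨fun t => (if t = j then (↑ww * ↑u : R) else 0) - ↑ww * rr t, ?_, ?_, ?_⟩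
    · simp only [sub_mul, ite_mul, zero_mul, Finset.sum_sub_distrib, Finset.sum_ite_eq']
      have h2 : ∑ t, ↑ww * rr t * f t = (↑ww : R) * ↑a := by
        rw [hrreq, Finset.mul_sum]
        exact Finset.sum_congr rfl fun t _ => by ring
      rw [h2]
      simp only [Finset.mem_univ, if_true]
      have := hww
      linear_combination this
    · intro t ht htj
      have htT : t ∉ T := Finset.mem_compl.mp ht
      simp [htj, hrr0 t htT]
    · have h0 : rr j = 0 := hrr0 j hjT
      simpa [h0] using P.primeCompl.mul_mem ww.2 u.2
  choose ρ0 hρa hρb hρc using hrels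
  set ρ' : Fin m → Fin m → R := fun j => if h : j ∈ Tᶜ then ρ0 j h else 0 with hρ'def
  have hρ'1 : ∀ j ∈ Tᶜ, ∑ i, ρ' j i * f i = 0 := by
    intro j hj; simp only [hρ'def, dif_pos hj]; exact hρa j hj
  have hρ'2 : ∀ j ∈ Tᶜ, ∀ t ∈ Tᶜ, t ≠ j → ρ' j t = 0 := by
    intro j hj t ht htj; simp only [hρ'def, dif_pos hj]; exact hρb j hj t ht htj
  have hρ'3 : ∀ j ∈ Tᶜ, ρ' j j ∉ P := by
    intro j hj; simp only [hρ'def, dif_pos hj]; exact hρc j hj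
  -- x localization
  have hxloc : ∀ x ∈ P, ∃ u : R, u ∉ P ∧ u * x ∈ Ideal.span (f '' ↑T) := by
    intro x hx
    have h0 : algebraMap R A x ∈ Ideal.map (algebraMap R A) (Ideal.span (f '' ↑T)) := by
      rw [Ideal.map_span, ← Set.image_comp]
      show algebraMap R A x ∈ Ideal.span (F '' ↑T)
      rw [hTspan, ← Localization.AtPrime.map_eq_maximalIdeal]
      exact Ideal.mem_map_of_mem _ hx
    rw [IsLocalization.mem_map_algebraMap_iff P.primeCompl] at h0
    obtain ⟨⟨a, u⟩, hau⟩ := h0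
    rw [show algebraMap R A x * algebraMap R A ↑u = algebraMap R A (x * ↑u) from
      (_root_.map_mul _ _ _).symm] at hau
    obtain ⟨ww, hww⟩ := (IsLocalization.eq_iff_exists P.primeCompl A).mp hau
    refine ⟨↑ww * ↑u, P.primeCompl.mul_mem ww.2 u.2, ?_⟩
    have h1 : (↑ww * ↑u : R) * x = ↑ww * ↑a := by linear_combination hww
    rw [h1]
    exact Ideal.mul_mem_left _ _ a.2
  -- Part B: P ≤ Fitt
  have hBle : P ≤ fittingIdeal m f (d - 1) := by
    intro x hx
    have hcolon : (fittingIdeal m f (d - 1)).colon ((Ideal.span {x} : Ideal R) : Set R) = ⊤ := by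
      by_contra hne
      obtain ⟨Q, hQmax, hQle⟩ := Ideal.exists_le_maximal _ hne
      by_cases hPQ : P ≤ Q
      · have hPQ' : P = Q := (‹P.IsMaximal›).eq_of_le hQmax.ne_top hPQ
        obtain ⟨u, huP, hux⟩ := hxloc x hx
        set V := ∏ j ∈ Tᶜ, ρ' j j with hVdef
        have hVx : V * (u * x) ∈ fittingIdeal m f (d - 1) :=
          fitt_span hd hdm f T hTcard ρ' hρ'1 hρ'2 hux
        have hmemCol : V * u ∈ (fittingIdeal m f (d - 1)).colon ((Ideal.span {x} : Ideal R) : Set R) :=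
          Ideal.mem_colon_span_singleton.mpr (by rwa [mul_assoc])
        have hVuP : V * u ∉ P := by
          intro hmem
          rcases hPprime.mem_or_mem hmem with h | h
          · rw [hVdef] at h
            obtain ⟨j, hj, hjP⟩ := Ideal.IsPrime.prod_mem_iff.mp h
            exact hρ'3 j hj hjP
          · exact huP h
        exact hVuP (hPQ' ▸ hQle hmemCol)
      · have ha : ∃ a, f a ∉ Q := by
          by_contra h
          push_neg at h
          exact hPQ (hf ▸ Ideal.span_le.mpr (by rintro y ⟨i, rfl⟩; exact h i))
        obtain ⟨a, haQ⟩ := ha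
        have hfb : ∀ b, f a ^ (m - d) * f b ∈ fittingIdeal m f (d - 1) := by
          intro b
          have hcard2 : ({a, b} : Finset (Fin m)).card ≤ d :=
            le_trans (Finset.card_insert_le _ _) (by simp; omega)
          obtain ⟨T', hsub', -, hT'card⟩ := Finset.exists_subsuperset_card_eq
            (Finset.subset_univ ({a, b} : Finset (Fin m))) hcard2 (by simpa using hdm)
          have haT' : a ∈ T' := hsub' (by simp)
          have hbT' : b ∈ T' := hsub' (by simp)
          set ρK : Fin m → Fin m → R :=
            fun j t => (if t = a then f j else 0) - (if t = j then f a else 0) with hρKdef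
          have h1 : ∀ j ∈ T'ᶜ, ∑ i, ρK j i * f i = 0 := by
            intro j hj
            simp only [hρKdef, sub_mul, ite_mul, zero_mul, Finset.sum_sub_distrib,
              Finset.sum_ite_eq']
            simp [mul_comm]
          have h2 : ∀ j ∈ T'ᶜ, ∀ t ∈ T'ᶜ, t ≠ j → ρK j t = 0 := by
            intro j hj t ht htj
            have hta : t ≠ a := by rintro rfl; exact (Finset.mem_compl.mp ht) haT'
            simp [hρKdef, hta, htj]
          have h3 := fitt_span hd hdm f T' hT'card ρK h1 h2
            (Ideal.subset_span ⟨b, hbT', rfl⟩)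
          have hprod : ∏ j ∈ T'ᶜ, ρK j j = (-f a) ^ (m - d) := by
            have hcardc : T'ᶜ.card = m - d := by
              rw [Finset.card_compl, hT'card, Fintype.card_fin]
            rw [← hcardc, ← Finset.prod_const]
            apply Finset.prod_congr rfl
            intro j hj
            have hja : j ≠ a := by rintro rfl; exact (Finset.mem_compl.mp hj) haT'
            simp [hρKdef, hja]
          rw [hprod] at h3
          have h4 := Ideal.mul_mem_left _ ((-1 : R) ^ (m - d)) h3
          have heq : (-1 : R) ^ (m - d) * ((-f a) ^ (m - d) * f b)
              = f a ^ (m - d) * f b := by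
            rw [← mul_assoc, ← mul_pow]
            ring_nf
          rwa [heq] at h4
        have hya : ∀ y ∈ P, f a ^ (m - d) * y ∈ fittingIdeal m f (d - 1) := by
          intro y hy
          rw [← hf] at hy
          induction hy using Submodule.span_induction with
          | mem z hz => obtain ⟨i, rfl⟩ := hz; exact hfb i
          | zero => simpa using zero_mem _
          | add p q hp hq ihp ihq => rw [mul_add]; exact add_mem ihp ihq
          | smul cc p hp ih => rw [smul_eq_mul, mul_left_comm]; exact Ideal.mul_mem_left _ _ ih
        have hmemCol : f a ^ (m - d) ∈ (fittingIdeal m f (d - 1)).colon ((Ideal.span {x} : Ideal R) : Set R) :=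
          Ideal.mem_colon_span_singleton.mpr (hya x hx)
        have hQ : f a ^ (m - d) ∈ Q := hQle hmemCol
        rcases Nat.eq_zero_or_pos (m - d) with h0 | hpos
        · rw [h0, pow_zero] at hQ
          exact hQmax.ne_top ((Ideal.eq_top_iff_one _).mpr hQ)
        · exact haQ (hQmax.isPrime.mem_of_pow_mem _ hQ)
    have h1 : (1 : R) ∈ (fittingIdeal m f (d - 1)).colon ((Ideal.span {x} : Ideal R) : Set R) := by
      rw [hcolon]; trivial
    simpa using Ideal.mem_colon_span_singleton.mp h1
  exact le_antisymm hAle hBle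
end

section
/- Let R be a Noetherian domain and I ⊂ R an ideal generated by m elements. Then tr(I)^(m−j) ⊆ Fitt_j(I) for all j with 1 ≤ j ≤ m. -/
open Ideal IsLocalRing

/-!
The trace ideal `I⁻¹ I` is spanned by the products `h * fᵢ` with `h ∈ I⁻¹`. For a fixed `h` the
elements `bᵢ = h fᵢ` lie in `R` and satisfy `bᵢ fₖ = bₖ fᵢ`, so `bᵢ eₖ - bₖ eᵢ` is a relation of
`f`. Given `m - j` such rows `b⁽ˡ⁾` and indices `σ l`, pick an injective `p` with `p l' ≠ σ l`
whenever `l ≤ l'` (possible greedily because `m - j < m`). The relations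
`b⁽ˡ⁾_{σ l} e_{p l} - b⁽ˡ⁾_{p l} e_{σ l}`, evaluated at the indices `p`, form a triangular matrix
with diagonal `b⁽ˡ⁾_{σ l}`, so `∏ₗ b⁽ˡ⁾_{σ l} = ∏ₗ h_l f_{σ l}` is a minor defining `Fitt_j`.
-/
open Finset in
lemma Fin.exists_injective_notMem_of_apply_eq {m : ℕ} :
    ∀ {n : ℕ} (σ : Fin n → Fin m) (S : Finset (Fin m)), n + #S < m →
      ∃ p : Fin n → Fin m, Function.Injective p ∧ (∀ l, p l ∉ S) ∧
        ∀ l l', σ l = p l' → l < l'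
  | 0, _, _, _ => ⟨Fin.elim0, fun a => a.elim0, fun l => l.elim0, fun _ l' => l'.elim0⟩
  | n + 1, σ, S, hcard => by
    classical
    obtain ⟨q, -, hq⟩ := exists_mem_notMem_of_card_lt_card (s := S ∪ univ.image σ) (t := univ)
      (by grind [card_union_le, card_image_le, card_univ, Fintype.card_fin])
    simp only [mem_union, mem_image, mem_univ, true_and, not_or, not_exists] at hq
    obtain ⟨p, hp_inj, hpS, hpσ⟩ :=
      exists_injective_notMem_of_apply_eq (σ ∘ Fin.succ) (insert q S)
        (by grind [card_insert_le])
    simp only [mem_insert, not_or] at hpS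
    refine ⟨Fin.cons q p, Fin.cons_injective_of_injective ?_ hp_inj, ?_, ?_⟩
    · rintro ⟨l, hl⟩
      exact (hpS l).1 hl
    · simp only [Fin.forall_fin_succ, Fin.cons_zero, Fin.cons_succ]
      exact ⟨hq.1, fun l => (hpS l).2⟩
    · simp only [Fin.forall_fin_succ, Fin.cons_zero, Fin.cons_succ]
      refine ⟨⟨fun h => (hq.2 0 h).elim, fun _ _ => Fin.succ_pos _⟩,
        fun l => ⟨fun h => (hq.2 _ h).elim, fun l' h => Fin.succ_lt_succ_iff.mpr (hpσ l l' h)⟩⟩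

lemma Fin.exists_injective_lt_of_apply_eq {m n : ℕ} (hn : n < m) (σ : Fin n → Fin m) :
    ∃ p : Fin n → Fin m, Function.Injective p ∧ ∀ l l', σ l = p l' → l < l' := by
  obtain ⟨p, hp_inj, -, hpσ⟩ := exists_injective_notMem_of_apply_eq σ ∅ (by simpa using hn)
  exact ⟨p, hp_inj, hpσ⟩

lemma prod_mem_fittingIdeal {R M : Type} [CommRing R] [AddCommGroup M] [Module R M] {m j : ℕ}
    (hj : m - j < m) (g : Fin m → M) (b : Fin (m - j) → Fin m → R)
    (hb : ∀ l i i', b l i • g i' = b l i' • g i) (σ : Fin (m - j) → Fin m) :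
    ∏ l, b l (σ l) ∈ fittingIdeal m g j := by
  classical
  obtain ⟨p, hp_inj, hpσ⟩ := Fin.exists_injective_lt_of_apply_eq hj σ
  let c : Fin (m - j) → Fin m → R := fun l =>
    Pi.single (p l) (b l (σ l)) - Pi.single (σ l) (b l (p l))
  have hc : ∀ l, ∑ i, c l i • g i = 0 := fun l => by
    simp only [c, Pi.sub_apply, sub_smul, Finset.sum_sub_distrib, Pi.single_apply, ite_smul,
      zero_smul, Finset.sum_ite_eq', Finset.mem_univ, if_true, hb l (σ l) (p l), sub_self]
  have hdet : (Matrix.of fun i l => c l (p i)).det = ∏ l, b l (σ l) := by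
    rw [Matrix.det_of_isLowerTriangular]
    · refine Finset.prod_congr rfl fun l _ => ?_
      simp [c, (hpσ l l).mt (lt_irrefl l)]
    · intro i k hki
      have hik : i < k := hki
      simp [c, hp_inj.ne hik.ne, (hpσ k i).mt (lt_asymm hik)]
  exact Ideal.subset_span ⟨c, hc, p, hdet.symm⟩

namespace FractionalIdeal

open nonZeroDivisors

variable {R K : Type*} [CommRing R] [IsDomain R] [Field K] [Algebra R K] [IsFractionRing R K]

lemma exists_algebraMap_eq_mul_of_mem_inv {I : Ideal R} (hI : I ≠ ⊥) {h : K}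
    (hh : h ∈ (I : FractionalIdeal R⁰ K)⁻¹) {x : R} (hx : x ∈ I) :
    ∃ r, algebraMap R K r = h * algebraMap R K x :=
  (mem_one_iff _).mp <| (mem_inv_iff (coeIdeal_ne_zero.mpr hI)).mp hh _ (mem_coeIdeal_of_mem _ hx)

lemma coe_inv_mul_span_range_pow_le {m : ℕ} (f : Fin m → R) (n : ℕ) {N : Submodule R K}
    (hN : ∀ h : Fin n → K, (∀ l, h l ∈ (span (Set.range f) : FractionalIdeal R⁰ K)⁻¹) →
      ∀ σ : Fin n → Fin m, ∏ l, h l * algebraMap R K (f (σ l)) ∈ N) :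
    ((((span (Set.range f) : FractionalIdeal R⁰ K)⁻¹ * span (Set.range f)) ^ n :
      FractionalIdeal R⁰ K) : Submodule R K) ≤ N := by
  set J := (span (Set.range f) : FractionalIdeal R⁰ K)⁻¹
  have hI : ((span (Set.range f) : FractionalIdeal R⁰ K) : Submodule R K) =
      Submodule.span R (Set.range (algebraMap R K ∘ f)) := by
    rw [coe_coeIdeal, IsLocalization.coeSubmodule_span, Set.range_comp]
  rw [coe_pow, coe_mul, hI, ← Submodule.span_eq (J : Submodule R K), Submodule.span_mul_span,
    Submodule.span_pow, Submodule.span_le]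
  intro x hx
  obtain ⟨g, rfl⟩ := Set.mem_pow.mp hx
  have hg : ∀ l, ∃ h ∈ J, ∃ i, (g l : K) = h * algebraMap R K (f i) := fun l => by
    obtain ⟨h, hh, _, ⟨i, rfl⟩, hgl⟩ := Set.mem_mul.mp (g l).2
    exact ⟨h, hh, i, hgl.symm⟩
  choose h hh σ hσ using hg
  simpa only [SetLike.mem_coe, List.prod_ofFn, hσ] using hN h hh σ

end FractionalIdeal

open nonZeroDivisors in
theorem trace_pow_le_fittingIdeal_general {R : Type} [CommRing R] [IsDomain R]
    (I : Ideal R) (hI : I ≠ ⊥)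
    (m : ℕ) (f : Fin m → R) (hf : Ideal.span (Set.range f) = I)
    (j : ℕ) (h1 : 1 ≤ j) (h2 : j ≤ m) :
    ((I : FractionalIdeal R⁰ (FractionRing R))⁻¹ *
        (I : FractionalIdeal R⁰ (FractionRing R))) ^ (m - j) ≤
      ((fittingIdeal m f j : Ideal R) : FractionalIdeal R⁰ (FractionRing R)) := by
  subst hf
  rw [← FractionalIdeal.coe_le_coe]
  refine FractionalIdeal.coe_inv_mul_span_range_pow_le f _ fun h hh σ => ?_
  choose b hb using fun l i =>
    FractionalIdeal.exists_algebraMap_eq_mul_of_mem_inv hI (hh l) (subset_span ⟨i, rfl⟩)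
  have hrel : ∀ l i i', b l i • f i' = b l i' • f i := fun l i i' =>
    IsFractionRing.injective R (FractionRing R) <| by
      simp only [smul_eq_mul, map_mul, hb]
      ring
  have hprod : ∏ l, h l * algebraMap R _ (f (σ l)) = algebraMap R _ (∏ l, b l (σ l)) := by
    simp only [map_prod, hb]
  rw [hprod]
  exact FractionalIdeal.mem_coeIdeal_of_mem _ (prod_mem_fittingIdeal (by omega) f b hrel σ)

open nonZeroDivisors in
theorem trace_pow_le_fittingIdeal {R : Type} [CommRing R] [IsDomain R] [IsNoetherianRing R]
    (I : Ideal R) (hI : I ≠ ⊥)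
    (m : ℕ) (f : Fin m → R) (hf : Ideal.span (Set.range f) = I)
    (j : ℕ) (h1 : 1 ≤ j) (h2 : j ≤ m) :
    ((I : FractionalIdeal R⁰ (FractionRing R))⁻¹ *
        (I : FractionalIdeal R⁰ (FractionRing R))) ^ (m - j) ≤
      ((fittingIdeal m f j : Ideal R) : FractionalIdeal R⁰ (FractionRing R)) :=
  trace_pow_le_fittingIdeal_general I hI m f hf j h1 h2
end

section
/- Let R be a Noetherian domain and I ⊂ R a nonzero ideal generated by 2 elements. Then Fitt_1(I) = tr(I) = I^{−1}·I. -/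
open Ideal IsLocalRing

open nonZeroDivisors in
private lemma exists_hom_aux {R : Type} [CommRing R] [IsDomain R] (I : Ideal R)
    (h : FractionRing R)
    (H : ∀ y ∈ I, ∃ r : R, algebraMap R (FractionRing R) r = h * algebraMap R (FractionRing R) y) :
    ∃ φ : ↥I →ₗ[R] R, ∀ y : ↥I,
      algebraMap R (FractionRing R) (φ y) = h * algebraMap R (FractionRing R) (y : R) := by
  have hinj : Function.Injective (algebraMap R (FractionRing R)) :=
    IsFractionRing.injective R (FractionRing R)
  choose r hr using H
  refine ⟨⟨⟨fun y => r y.1 y.2, ?_⟩, ?_⟩, fun y => hr y.1 y.2⟩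
  · intro y z
    apply hinj
    simp only [map_add, hr, Submodule.coe_add, mul_add]
  · intro c y
    apply hinj
    simp only [RingHom.id_apply, hr, SetLike.val_smul, smul_eq_mul, _root_.map_mul]
    ring

private lemma exists_h_aux {R : Type} [CommRing R] [IsDomain R] {a b c0 c1 : R}
    (hab : a ≠ 0 ∨ b ≠ 0) (hrel : c0 * a + c1 * b = 0) :
    ∃ h : FractionRing R,
      h * algebraMap R (FractionRing R) a = algebraMap R (FractionRing R) (-c1) ∧
      h * algebraMap R (FractionRing R) b = algebraMap R (FractionRing R) c0 := by
  have hinj : Function.Injective (algebraMap R (FractionRing R)) :=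
    IsFractionRing.injective R (FractionRing R)
  by_cases hb : b = 0
  · have ha : a ≠ 0 := hab.resolve_right (by simp [hb])
    have hc0 : c0 = 0 := by
      have h' := hrel
      rw [hb, mul_zero, add_zero] at h'
      exact (mul_eq_zero.mp h').resolve_right ha
    have haK : algebraMap R (FractionRing R) a ≠ 0 := fun h =>
      ha (hinj (by simpa using h))
    refine ⟨algebraMap R (FractionRing R) (-c1) / algebraMap R (FractionRing R) a,
      div_mul_cancel₀ _ haK, ?_⟩
    simp [hb, hc0]
  · have hbK : algebraMap R (FractionRing R) b ≠ 0 := fun h =>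
      hb (hinj (by simpa using h))
    refine ⟨algebraMap R (FractionRing R) c0 / algebraMap R (FractionRing R) b, ?_,
      div_mul_cancel₀ _ hbK⟩
    rw [div_mul_eq_mul_div, div_eq_iff hbK, ← _root_.map_mul, ← _root_.map_mul]
    exact congrArg _ (by linear_combination hrel)

open nonZeroDivisors in
theorem fittingIdeal_one_eq_trace_of_two_gen {R : Type} [CommRing R] [IsDomain R]
    [IsNoetherianRing R] (I : Ideal R) (hI : I ≠ ⊥)
    (f : Fin 2 → R) (hf : Ideal.span (Set.range f) = I) :
    (fittingIdeal 2 f 1 : Ideal R) = traceIdeal R ↥I ∧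
    ((fittingIdeal 2 f 1 : Ideal R) : FractionalIdeal R⁰ (FractionRing R)) =
      (I : FractionalIdeal R⁰ (FractionRing R))⁻¹ *
        (I : FractionalIdeal R⁰ (FractionRing R)) := by
  classical
  have hinj : Function.Injective (algebraMap R (FractionRing R)) :=
    IsFractionRing.injective R (FractionRing R)
  -- basic facts about the generators
  have hrange : Set.range f = {f 0, f 1} := by
    ext x
    simp [Fin.exists_fin_two, eq_comm]
  have hI2 : I = Ideal.span {f 0, f 1} := by rw [← hf, hrange]
  have ha : f 0 ∈ I := by rw [hI2]; exact Ideal.subset_span (by simp)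
  have hb : f 1 ∈ I := by rw [hI2]; exact Ideal.subset_span (by simp)
  have hab : f 0 ≠ 0 ∨ f 1 ≠ 0 := by
    by_contra hcon
    push_neg at hcon
    apply hI
    rw [hI2, hcon.1, hcon.2]
    simp
  -- a clean description of the Fitting ideal
  have fitt_eq : fittingIdeal 2 f 1 = Ideal.span {x : R | ∃ c : Fin 2 → R,
      c 0 * f 0 + c 1 * f 1 = 0 ∧ ∃ j : Fin 2, x = c j} := by
    rw [fittingIdeal]
    congr 1
    ext x
    constructor
    · rintro ⟨c, hc, r, hx⟩
      refine ⟨c ⟨0, by norm_num⟩, ?_, r ⟨0, by norm_num⟩, ?_⟩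
      · have h' := hc ⟨0, by norm_num⟩
        rwa [Fin.sum_univ_two, smul_eq_mul, smul_eq_mul] at h'
      · exact hx.trans (Matrix.det_fin_one _)
    · rintro ⟨c, hrel, j, hx⟩
      refine ⟨fun _ => c, fun l => ?_, fun _ => j,
        hx.trans (Matrix.det_fin_one (Matrix.of fun i l => (fun _ => c) l ((fun _ => j) i))).symm⟩
      rw [Fin.sum_univ_two, smul_eq_mul, smul_eq_mul]
      exact hrel
  -- membership of entries of relations in the Fitting ideal
  have fitt_gen : ∀ (c : Fin 2 → R), c 0 * f 0 + c 1 * f 1 = 0 → ∀ j : Fin 2,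
      c j ∈ fittingIdeal 2 f 1 := by
    intro c hc j
    rw [fitt_eq]
    exact Ideal.subset_span ⟨c, hc, j, rfl⟩
  -- from a relation, produce an element of the inverse acting correctly,
  -- and the corresponding homomorphism I →ₗ R
  have Hsmul : ∀ (h : FractionRing R) (c0 c1 : R),
      h * algebraMap R (FractionRing R) (f 0) = algebraMap R (FractionRing R) (-c1) →
      h * algebraMap R (FractionRing R) (f 1) = algebraMap R (FractionRing R) c0 →
      ∀ y ∈ I, ∃ rr : R, algebraMap R (FractionRing R) rr = h * algebraMap R (FractionRing R) y := by
    intro h c0 c1 h1 h2 y hy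
    rw [hI2, Ideal.mem_span_pair] at hy
    obtain ⟨p, q, hpq⟩ := hy
    refine ⟨p * (-c1) + q * c0, ?_⟩
    rw [map_add, _root_.map_mul, _root_.map_mul, ← h1, ← h2, ← hpq, map_add, _root_.map_mul, _root_.map_mul]
    ring
  have key : ∀ c0 c1 : R, c0 * f 0 + c1 * f 1 = 0 →
      ∃ φ : ↥I →ₗ[R] R, φ ⟨f 0, ha⟩ = -c1 ∧ φ ⟨f 1, hb⟩ = c0 := by
    intro c0 c1 hrel
    obtain ⟨h, h1, h2⟩ := exists_h_aux hab hrel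
    obtain ⟨φ, hφ⟩ := exists_hom_aux I h (Hsmul h c0 c1 h1 h2)
    refine ⟨φ, hinj ?_, hinj ?_⟩
    · rw [hφ]; exact h1
    · rw [hφ]; exact h2
  -- values of a hom are determined by its values on the generators
  have philemma : ∀ φ : ↥I →ₗ[R] R,
      φ ⟨f 1, hb⟩ * f 0 + (-(φ ⟨f 0, ha⟩)) * f 1 = 0 := by
    intro φ
    have hsw : f 0 • (⟨f 1, hb⟩ : ↥I) = f 1 • (⟨f 0, ha⟩ : ↥I) :=
      Subtype.ext (by simp [smul_eq_mul, mul_comm])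
    have h2 := congrArg φ hsw
    rw [map_smul, map_smul, smul_eq_mul, smul_eq_mul] at h2
    linear_combination h2
  have phival : ∀ (φ : ↥I →ₗ[R] R) (y : ↥I) (p q : R), p * f 0 + q * f 1 = (y : R) →
      φ y = p * φ ⟨f 0, ha⟩ + q * φ ⟨f 1, hb⟩ := by
    intro φ y p q hpq
    have hy : y = p • (⟨f 0, ha⟩ : ↥I) + q • (⟨f 1, hb⟩ : ↥I) :=
      Subtype.ext (by simp [smul_eq_mul, ← hpq])
    rw [hy, map_add, map_smul, map_smul, smul_eq_mul, smul_eq_mul]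
  -- Part 1
  have part1 : fittingIdeal 2 f 1 = traceIdeal R ↥I := by
    apply le_antisymm
    · rw [fitt_eq, Ideal.span_le]
      rintro x ⟨c, hrel, j, rfl⟩
      obtain ⟨φ, hφa, hφb⟩ := key _ _ hrel
      have hmem : c j ∈ LinearMap.range φ := by
        have hj : j = 0 ∨ j = 1 := by
          revert j; decide
        rcases hj with rfl | rfl
        · exact ⟨⟨f 1, hb⟩, hφb⟩
        · exact ⟨-(⟨f 0, ha⟩ : ↥I), by rw [map_neg, hφa, neg_neg]⟩
      exact (le_iSup (fun φ : ↥I →ₗ[R] R => LinearMap.range φ) φ) hmem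
    · show (⨆ φ : ↥I →ₗ[R] R, LinearMap.range φ) ≤ _
      apply iSup_le
      rintro φ x ⟨y, rfl⟩
      obtain ⟨p, q, hpq⟩ := Ideal.mem_span_pair.mp (by rw [← hI2]; exact y.2)
      rw [phival φ y p q hpq]
      have h1 : φ ⟨f 1, hb⟩ ∈ fittingIdeal 2 f 1 := by
        simpa using fitt_gen ![φ ⟨f 1, hb⟩, -(φ ⟨f 0, ha⟩)] (by simpa using philemma φ) 0
      have h0 : φ ⟨f 0, ha⟩ ∈ fittingIdeal 2 f 1 := by
        have h' := fitt_gen ![φ ⟨f 1, hb⟩, -(φ ⟨f 0, ha⟩)] (by simpa using philemma φ) 1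
        simp only [Matrix.cons_val_one, Matrix.head_cons] at h'
        simpa using neg_mem h'
      exact add_mem (Ideal.mul_mem_left _ _ h0) (Ideal.mul_mem_left _ _ h1)
  -- Part 2
  have hInz : (I : FractionalIdeal R⁰ (FractionRing R)) ≠ 0 :=
    FractionalIdeal.coeIdeal_ne_zero.mpr hI
  have part2 : ((fittingIdeal 2 f 1 : Ideal R) : FractionalIdeal R⁰ (FractionRing R)) =
      (I : FractionalIdeal R⁰ (FractionRing R))⁻¹ *
        (I : FractionalIdeal R⁰ (FractionRing R)) := by
    apply le_antisymm
    · intro x hx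
      obtain ⟨x', hx', rfl⟩ := (FractionalIdeal.mem_coeIdeal _).mp hx
      rw [fitt_eq] at hx'
      refine Submodule.span_induction ?_ ?_ ?_ ?_ hx'
      · rintro z ⟨c, hrel, j, rfl⟩
        obtain ⟨h, h1, h2⟩ := exists_h_aux hab hrel
        have hhinv : h ∈ (I : FractionalIdeal R⁰ (FractionRing R))⁻¹ := by
          rw [FractionalIdeal.mem_inv_iff hInz]
          intro y hy
          obtain ⟨z', hz', rfl⟩ := (FractionalIdeal.mem_coeIdeal _).mp hy
          obtain ⟨rr, hrr⟩ := Hsmul h (c 0) (c 1) h1 h2 z' hz'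
          exact (FractionalIdeal.mem_one_iff _).mpr ⟨rr, hrr⟩
        have hj : j = 0 ∨ j = 1 := by revert j; decide
        rcases hj with rfl | rfl
        · rw [show algebraMap R (FractionRing R) (c 0)
              = h * algebraMap R (FractionRing R) (f 1) from h2.symm]
          exact FractionalIdeal.mul_mem_mul hhinv (FractionalIdeal.mem_coeIdeal_of_mem _ hb)
        · rw [show algebraMap R (FractionRing R) (c 1)
              = h * algebraMap R (FractionRing R) (-(f 0)) from by
            rw [map_neg, mul_neg, h1, map_neg, neg_neg]]
          exact FractionalIdeal.mul_mem_mul hhinv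
            (FractionalIdeal.mem_coeIdeal_of_mem _ (neg_mem ha))
      · simp
        exact FractionalIdeal.mem_coe.mp (Submodule.zero_mem _)
      · intro u v _ _ hu hv
        rw [map_add]
        exact FractionalIdeal.mem_coe.mp (Submodule.add_mem _
          (FractionalIdeal.mem_coe.mpr hu) (FractionalIdeal.mem_coe.mpr hv))
      · intro a u _ hu
        rw [smul_eq_mul, _root_.map_mul, ← Algebra.smul_def]
        exact FractionalIdeal.mem_coe.mp (Submodule.smul_mem _ _
          (FractionalIdeal.mem_coe.mpr hu))
    · rw [FractionalIdeal.mul_le]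
      intro h hh z hz
      obtain ⟨y, hy, rfl⟩ := (FractionalIdeal.mem_coeIdeal _).mp hz
      rw [FractionalIdeal.mem_inv_iff hInz] at hh
      obtain ⟨u, hu⟩ := (FractionalIdeal.mem_one_iff _).mp
        (hh _ (FractionalIdeal.mem_coeIdeal_of_mem _ ha))
      obtain ⟨v, hv⟩ := (FractionalIdeal.mem_one_iff _).mp
        (hh _ (FractionalIdeal.mem_coeIdeal_of_mem _ hb))
      have hrel : v * f 0 + (-u) * f 1 = 0 := by
        apply hinj
        rw [map_add, _root_.map_mul, _root_.map_mul, map_neg, hu, hv, map_zero]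
        ring
      have hv' : v ∈ fittingIdeal 2 f 1 := by
        simpa using fitt_gen ![v, -u] (by simpa using hrel) 0
      have hu' : u ∈ fittingIdeal 2 f 1 := by
        have h' := fitt_gen ![v, -u] (by simpa using hrel) 1
        simp only [Matrix.cons_val_one, Matrix.head_cons] at h'
        simpa using neg_mem h'
      obtain ⟨p, q, hpq⟩ := Ideal.mem_span_pair.mp (by rw [← hI2]; exact hy)
      refine (FractionalIdeal.mem_coeIdeal _).mpr ⟨p * u + q * v,
        add_mem (Ideal.mul_mem_left _ _ hu') (Ideal.mul_mem_left _ _ hv'), ?_⟩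
      rw [map_add, _root_.map_mul, _root_.map_mul, hu, hv, ← hpq, map_add, _root_.map_mul, _root_.map_mul]
      ring
  exact ⟨part1, part2⟩
end
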